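/- arXiv:1806.03390 — 3 statements merged into one kernel-verified Lean document; each statement's English description precedes it below -/
import Mathlib

section
/- Let X and Z be complex Banach spaces, T ∈ B(X), B ∈ B(Z), and assume qT = Bq for some injective q ∈ B(X,Z) whose range qX is closed in Z. Let λ ∈ σ(T)∖(σ_p(T*) ∪ σ_p(B*) ∪ σ_r(B*)), and let X₀* be a closed subspace of X* of finite codimension (i.e., the quotient X*/X₀* is finite-dimensional). Then there exists a sequence {z*_n} in Z* such that q*z*_n ∈ X₀* and ‖q*z*_n‖ = 1 for every n, and ‖(λ−B*)z*_n‖ → 0 as n → ∞. -/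
open NormedSpace Filter Topology Set

noncomputable section

/-- The Banach-space adjoint (dual map) of a bounded operator:
`(dualOp q) g = g ∘ q`. -/
noncomputable def dualOp {E F : Type*} [NormedAddCommGroup E] [NormedSpace ℂ E]
    [NormedAddCommGroup F] [NormedSpace ℂ F] (q : E →L[ℂ] F) :
    StrongDual ℂ F →L[ℂ] StrongDual ℂ E :=
  (ContinuousLinearMap.compL ℂ E F ℂ).flip q

/-- The point spectrum (set of eigenvalues) of a bounded operator. -/
def pointSpectrum {E : Type*} [NormedAddCommGroup E] [NormedSpace ℂ E]
    (T : E →L[ℂ] E) : Set ℂ :=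
  {lam : ℂ | ∃ x : E, x ≠ 0 ∧ T x = lam • x}

/-- The residual spectrum of a bounded operator: `lam - T` is injective but does not
have dense range. -/
def residualSpectrum {E : Type*} [NormedAddCommGroup E] [NormedSpace ℂ E]
    (T : E →L[ℂ] E) : Set ℂ :=
  {lam : ℂ | Function.Injective (fun x : E => lam • x - T x) ∧
    ¬ Dense (Set.range (fun x : E => lam • x - T x))}

/-!
Put `Q = q*`, `S = λ - B*` and `R = λ - T*`, so that `Q S = R Q`. Here `Q` is onto because `q` is
an isomorphism onto its closed range, `S` has dense range and `R` is injective. If the theorem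
failed, then `‖Q g‖ ≤ K ‖S g‖` whenever `Q g ∈ X₀*`. Let `W ⊆ ker Q` be the closure of
`S (ker Q)`. Then `Q g ↦ S g mod W` is an operator `Φ : X* → Z*/W` that is bounded below on
`X₀*`; as `X₀*` has finite codimension, `Φ` has closed range, and its range is dense, so `Φ` is
onto. Since `R` is injective this forces `W = ker Q`, and lifting through `Q` then gives
`‖f‖ ≤ K' ‖R f‖` on `X₀*`, hence on all of `X*`. But an operator whose adjoint is bounded below
is onto (Hahn–Banach and the iteration of the open mapping theorem), so `λ - T`, which is
injective because `λ - B*` has dense range, would be invertible.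
-/

open Function NNReal Metric

section Banach

variable {𝕜 E F G : Type*} [NontriviallyNormedField 𝕜] [NormedAddCommGroup E] [NormedSpace 𝕜 E]
  [NormedAddCommGroup F] [NormedSpace 𝕜 F] [NormedAddCommGroup G] [NormedSpace 𝕜 G]

lemma Submodule.le_mul_norm_mk {W : Submodule 𝕜 E} {a : ℝ} {K : ℝ≥0} {x : E}
    (h : ∀ w ∈ W, a ≤ K * ‖x - w‖) : a ≤ K * ‖(Submodule.Quotient.mk x : E ⧸ W)‖ := by
  rcases eq_zero_or_pos K with rfl | hK
  · simpa using h 0 W.zero_mem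
  rw [← div_le_iff₀' (by exact_mod_cast hK)]
  refine QuotientAddGroup.le_norm_iff.2 fun m hm => ?_
  have hw : x - m ∈ W := (Submodule.Quotient.eq W).1 hm.symm
  rw [div_le_iff₀' (by exact_mod_cast hK)]
  simpa using h _ hw

namespace ContinuousLinearMap

-- The iteration in Mathlib's proof of the open mapping theorem, which is not exposed on its own.
lemma surjective_of_exists_approx_preimage [CompleteSpace E] (A : E →L[𝕜] F) (C : ℝ≥0)
    (h : ∀ y, ∃ x, ‖x‖ ≤ C * ‖y‖ ∧ ‖y - A x‖ ≤ ‖y‖ / 2) : Surjective A := by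
  intro y
  choose pre hpre using h
  set D : F → F := fun z => z - A (pre z)
  have hD : ∀ n, ‖D^[n] y‖ ≤ (1 / 2) ^ n * ‖y‖ := by
    intro n
    induction n with
    | zero => simp
    | succ n ih =>
      rw [iterate_succ_apply', pow_succ]
      linarith [(hpre (D^[n] y)).2]
  have hsum : Summable fun n => pre (D^[n] y) := by
    refine Summable.of_norm_bounded (summable_geometric_two.mul_left (C * ‖y‖)) fun n => ?_
    calc ‖pre (D^[n] y)‖ ≤ C * ‖D^[n] y‖ := (hpre _).1
      _ ≤ C * ((1 / 2) ^ n * ‖y‖) := by gcongr; exact hD n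
      _ = C * ‖y‖ * (1 / 2) ^ n := by ring
  have hpartial : ∀ n, A (∑ i ∈ Finset.range n, pre (D^[i] y)) = y - D^[n] y := by
    intro n
    induction n with
    | zero => simp
    | succ n ih =>
      rw [Finset.sum_range_succ, map_add, ih, iterate_succ_apply']
      simp only [D]
      abel
  have hDlim : Tendsto (fun n => D^[n] y) atTop (𝓝 0) :=
    squeeze_zero_norm hD (by simpa using (tendsto_pow_atTop_nhds_zero_of_lt_one
      (by norm_num : (0 : ℝ) ≤ 1 / 2) (by norm_num)).mul_const ‖y‖)
  refine ⟨∑' n, pre (D^[n] y), tendsto_nhds_unique (hsum.hasSum.mapL A).tendsto_sum_nat ?_⟩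
  simpa [← map_sum, hpartial] using tendsto_const_nhds.sub hDlim

lemma isClosed_range_of_bound_on [CompleteSpace 𝕜] [CompleteSpace E] (A : E →L[𝕜] F)
    {E₀ : Submodule 𝕜 E} (hE₀ : IsClosed (E₀ : Set E)) [FiniteDimensional 𝕜 (E ⧸ E₀)]
    {K : ℝ≥0} (hK : ∀ x ∈ E₀, ‖x‖ ≤ K * ‖A x‖) : IsClosed (range A) := by
  have : CompleteSpace E₀ := hE₀.completeSpace_coe
  have hanti : AntilipschitzWith K (A.comp E₀.subtypeL) :=
    antilipschitz_of_bound _ fun x => hK x x.2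
  have hmap : IsClosed (E₀.map A.toLinearMap : Set F) := by
    convert hanti.isClosed_range (A.comp E₀.subtypeL).uniformContinuous using 1
    ext; simp
  rw [← A.coe_coe, ← LinearMap.coe_range]
  exact LinearMap.isClosed_range_of_isClosed_map_of_finiteDimensional_quotient hmap

lemma exists_bound_of_injective_of_bound_on [CompleteSpace 𝕜] [CompleteSpace E]
    [CompleteSpace F] (A : E →L[𝕜] F) (hA : Injective A) {E₀ : Submodule 𝕜 E}
    (hE₀ : IsClosed (E₀ : Set E)) [FiniteDimensional 𝕜 (E ⧸ E₀)] {K : ℝ≥0}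
    (hK : ∀ x ∈ E₀, ‖x‖ ≤ K * ‖A x‖) : ∃ K' : ℝ≥0, ∀ x, ‖x‖ ≤ K' * ‖A x‖ := by
  obtain ⟨K', hK'⟩ :=
    A.antilipschitz_of_injective_of_isClosed_range hA (A.isClosed_range_of_bound_on hE₀ hK)
  exact ⟨K', fun x => by simpa using hK'.le_mul_dist x 0⟩

lemma exists_comp_eq_of_ker_le [CompleteSpace E] [CompleteSpace F] {Q : E →L[𝕜] F}
    (hQ : Surjective Q) (φ : E →L[𝕜] G) (h : Q.ker ≤ φ.ker) :
    ∃ ψ : F →L[𝕜] G, ψ.comp Q = φ := by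
  obtain ⟨s, hs⟩ := Q.toLinearMap.exists_rightInverse_of_surjective (LinearMap.range_eq_top.2 hQ)
  have hφs : ∀ x, φ (s (Q x)) = φ x := fun x => by
    rw [← sub_eq_zero, ← map_sub]
    refine h ?_
    simp [LinearMap.mem_ker, show Q (s (Q x)) = Q x from LinearMap.congr_fun hs (Q x)]
  let ψ : F →ₗ[𝕜] G := φ.toLinearMap ∘ₗ s
  have hψ : ⇑ψ ∘ Q = φ := funext hφs
  refine ⟨⟨ψ, (Q.isQuotientMap hQ).continuous_iff.2 (hψ ▸ φ.continuous)⟩, ?_⟩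
  ext x
  exact hφs x

end ContinuousLinearMap

section Intertwining

variable {Q : E →L[𝕜] F} {S : E →L[𝕜] E} {R : F →L[𝕜] F}

lemma topologicalClosure_map_ker_le_ker (hQS : Semiconj Q S R) :
    (Q.ker.map S.toLinearMap).topologicalClosure ≤ Q.ker := by
  refine Submodule.topologicalClosure_minimal _ ?_ Q.isClosed_ker
  rintro - ⟨n, hn, rfl⟩
  simp_all [LinearMap.mem_ker, hQS n]

lemma norm_le_mul_norm_sub_of_mem_topologicalClosure {F₀ : Submodule 𝕜 F} {K : ℝ≥0}
    (hK : ∀ g, Q g ∈ F₀ → ‖Q g‖ ≤ K * ‖S g‖) {g w : E} (hg : Q g ∈ F₀)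
    (hw : w ∈ (Q.ker.map S.toLinearMap).topologicalClosure) : ‖Q g‖ ≤ K * ‖S g - w‖ := by
  have hclosed : IsClosed {w | ‖Q g‖ ≤ K * ‖S g - w‖} :=
    isClosed_le continuous_const (continuous_const.mul (continuous_const.sub continuous_id).norm)
  refine closure_minimal ?_ hclosed hw
  rintro - ⟨n, hn, rfl⟩
  replace hn : Q n = 0 := hn
  have hQ : Q (g - n) = Q g := by rw [map_sub, hn, sub_zero]
  simpa [hQ] using hK (g - n) (hQ ▸ hg)

lemma ker_le_topologicalClosure_map_ker [CompleteSpace 𝕜] [CompleteSpace E] [CompleteSpace F]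
    (hQS : Semiconj Q S R) (hQ : Surjective Q)
    (hS : DenseRange S) (hR : Injective R) {F₀ : Submodule 𝕜 F}
    (hF₀ : IsClosed (F₀ : Set F)) [FiniteDimensional 𝕜 (F ⧸ F₀)] {K : ℝ≥0}
    (hK : ∀ g, Q g ∈ F₀ → ‖Q g‖ ≤ K * ‖S g‖) :
    Q.ker ≤ (Q.ker.map S.toLinearMap).topologicalClosure := by
  set W := (Q.ker.map S.toLinearMap).topologicalClosure
  have : IsClosed (W : Set E) := Submodule.isClosed_topologicalClosure _
  have hWQ : W ≤ Q.ker := topologicalClosure_map_ker_le_ker hQS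
  have hSW : ∀ n ∈ Q.ker, S n ∈ W := fun n hn =>
    Submodule.le_topologicalClosure _ ⟨n, hn, rfl⟩
  obtain ⟨Φ, hΦ⟩ := ContinuousLinearMap.exists_comp_eq_of_ker_le hQ (W.mkQL.comp S)
    fun n hn => by simpa [Submodule.Quotient.mk_eq_zero] using hSW n hn
  have hΦQ : ∀ g, Φ (Q g) = Submodule.Quotient.mk (S g) := fun g => by
    simpa using congr($hΦ g)
  have hΦbound : ∀ f ∈ F₀, ‖f‖ ≤ K * ‖Φ f‖ := by
    intro f hf
    obtain ⟨g, rfl⟩ := hQ f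
    rw [hΦQ]
    exact Submodule.le_mul_norm_mk fun w hw =>
      norm_le_mul_norm_sub_of_mem_topologicalClosure hK hf hw
  have hΦdense : DenseRange Φ := by
    refine Dense.mono ?_ ((W.mkQ_surjective.denseRange).comp hS W.mkQL.continuous)
    rintro - ⟨g, rfl⟩
    exact ⟨Q g, hΦQ g⟩
  have hΦsurj : Surjective Φ := by
    rw [← range_eq_univ, ← (Φ.isClosed_range_of_bound_on hF₀ hΦbound).closure_eq]
    exact hΦdense.closure_range
  intro ν hν
  obtain ⟨g, hg⟩ := hΦsurj.comp hQ (Submodule.Quotient.mk ν)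
  have hSgν : S g - ν ∈ W := (Submodule.Quotient.eq W).1 (by simpa [hΦQ] using hg)
  have hQSg : Q (S g) = 0 := by
    have h : Q (S g - ν) = 0 := hWQ hSgν
    rwa [map_sub, show Q ν = 0 from hν, sub_zero] at h
  have hQg : Q g = 0 := hR (by rw [← hQS g, hQSg, map_zero])
  simpa using sub_mem (hSW g hQg) hSgν

theorem exists_bound_of_semiconj [CompleteSpace 𝕜] [CompleteSpace E] [CompleteSpace F]
    (hQS : Semiconj Q S R) (hQ : Surjective Q)
    (hS : DenseRange S) (hR : Injective R) {F₀ : Submodule 𝕜 F}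
    (hF₀ : IsClosed (F₀ : Set F)) [FiniteDimensional 𝕜 (F ⧸ F₀)] {K : ℝ≥0}
    (hK : ∀ g, Q g ∈ F₀ → ‖Q g‖ ≤ K * ‖S g‖) :
    ∃ K' : ℝ≥0, ∀ f, ‖f‖ ≤ K' * ‖R f‖ := by
  obtain ⟨C, hC, hlift⟩ := Q.exists_preimage_norm_le hQ
  have hker := ker_le_topologicalClosure_map_ker hQS hQ hS hR hF₀ hK
  refine R.exists_bound_of_injective_of_bound_on hR hF₀ (K := K * C.toNNReal) fun f hf => ?_
  obtain ⟨g, rfl⟩ := hQ f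
  obtain ⟨h, hh, hnorm⟩ := hlift (R (Q g))
  have hw : S g - h ∈ Q.ker := by simp [LinearMap.mem_ker, hQS g, hh]
  calc ‖Q g‖ ≤ K * ‖S g - (S g - h)‖ :=
        norm_le_mul_norm_sub_of_mem_topologicalClosure hK hf (hker hw)
    _ = K * ‖h‖ := by rw [sub_sub_cancel]
    _ ≤ K * (C * ‖R (Q g)‖) := by gcongr
    _ = _ := by rw [NNReal.coe_mul, Real.coe_toNNReal _ hC.le]; ring

end Intertwining

end Banach

lemma exists_seq_norm_eq_one_tendsto_zero {𝕜 E F G : Type*} [RCLike 𝕜] [NormedAddCommGroup E]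
    [NormedSpace 𝕜 E] [NormedAddCommGroup F] [NormedSpace 𝕜 F] [NormedAddCommGroup G]
    [NormedSpace 𝕜 G] (P : E →L[𝕜] F) (S : E →L[𝕜] G) (F₀ : Submodule 𝕜 F)
    (h : ¬∃ K : ℝ≥0, ∀ g, P g ∈ F₀ → ‖P g‖ ≤ K * ‖S g‖) :
    ∃ gs : ℕ → E, (∀ n, P (gs n) ∈ F₀ ∧ ‖P (gs n)‖ = 1) ∧
      Tendsto (fun n => ‖S (gs n)‖) atTop (𝓝 0) := by
  push Not at h
  have hstep : ∀ n : ℕ, ∃ g, P g ∈ F₀ ∧ ‖P g‖ = 1 ∧ ‖S g‖ ≤ 1 / ((n : ℝ) + 1) := by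
    intro n
    obtain ⟨g, hg, hlt⟩ := h (n + 1)
    have hPg : 0 < ‖P g‖ := lt_of_le_of_lt (by positivity) hlt
    refine ⟨((‖P g‖⁻¹ : ℝ) : 𝕜) • g, by simpa using F₀.smul_mem _ hg, ?_, ?_⟩
    · simp [norm_smul, hPg.ne']
    · push_cast at hlt
      rw [map_smul, norm_smul, RCLike.norm_ofReal, abs_inv, abs_norm, inv_mul_le_iff₀ hPg,
        mul_one_div, le_div_iff₀ (by positivity)]
      linarith
  choose gs hgs using hstep
  exact ⟨gs, fun n => ⟨(hgs n).1, (hgs n).2.1⟩, squeeze_zero (fun n => norm_nonneg _)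
    (fun n => (hgs n).2.2) tendsto_one_div_add_atTop_nhds_zero_nat⟩

section DualOp

variable {E F : Type*} [NormedAddCommGroup E] [NormedSpace ℂ E] [NormedAddCommGroup F]
  [NormedSpace ℂ F]

@[simp]
lemma dualOp_apply (A : E →L[ℂ] F) (g : StrongDual ℂ F) : dualOp A g = g.comp A := rfl

lemma coe_dualOp_smul_id_sub (lam : ℂ) (A : E →L[ℂ] E) :
    ⇑(dualOp (lam • ContinuousLinearMap.id ℂ E - A)) = fun g => lam • g - dualOp A g := by
  ext g x
  simp

lemma Function.Semiconj.dualOp {q : E →L[ℂ] F} {A : E →L[ℂ] E} {B : F →L[ℂ] F}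
    (h : Semiconj q A B) : Semiconj (dualOp q) (dualOp B) (dualOp A) := fun g => by
  ext x
  simp [h x]

lemma injective_of_denseRange_dualOp {A : E →L[ℂ] F} (hA : DenseRange (dualOp A)) :
    Injective A := by
  refine (injective_iff_map_eq_zero A).2 fun x hx => ?_
  have hclosed : IsClosed {f : StrongDual ℂ E | f x = 0} :=
    isClosed_eq (continuous_id.clm_apply continuous_const) continuous_const
  have hall : range (dualOp A) ⊆ {f | f x = 0} := by
    rintro - ⟨g, rfl⟩
    simp [hx]
  exact SeparatingDual.eq_zero_of_forall_dual_eq_zero fun f =>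
    hclosed.closure_subset_iff.2 hall (hA f)

lemma dualOp_surjective [CompleteSpace E] [CompleteSpace F] {q : E →L[ℂ] F}
    (hinj : Injective q) (hcl : IsClosed (range q)) : Surjective (dualOp q) := fun f => by
  let e := q.equivRange hinj hcl
  obtain ⟨g, hg, -⟩ := exists_extension_norm_eq _ (f.comp e.symm.toContinuousLinearMap)
  refine ⟨g, ?_⟩
  ext x
  have h := hg (e x)
  simp only [ContinuousLinearMap.comp_apply, ContinuousLinearEquiv.coe_coe,
    ContinuousLinearEquiv.symm_apply_apply] at h
  exact h

lemma dualOp_extendRCLike (A : E →L[ℂ] F) (f : StrongDual ℝ F) :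
    dualOp A (StrongDual.extendRCLike f) =
      StrongDual.extendRCLike (f.comp (A.restrictScalars ℝ)) := by
  ext x
  simp [StrongDual.extendRCLike_apply]

lemma mem_closure_image_closedBall_of_dualOp_bound {A : E →L[ℂ] F} {K : ℝ≥0}
    (hA : ∀ g, ‖g‖ ≤ K * ‖dualOp A g‖) {r : ℝ} {y : F} (hy : K * ‖y‖ < r) :
    y ∈ closure (A '' closedBall 0 r) := by
  have hr : 0 < r := lt_of_le_of_lt (by positivity) hy
  by_contra hy'
  obtain ⟨f, u, hfu, hfy⟩ := geometric_hahn_banach_closed_point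
    (((convex_closedBall (0 : E) r).linear_image (A.restrictScalars ℝ).toLinearMap).closure)
    isClosed_closure hy'
  have hball : ∀ x ∈ closedBall (0 : E) r, f (A x) < u := fun x hx =>
    hfu _ (subset_closure (mem_image_of_mem _ hx))
  have hfA : ‖f.comp (A.restrictScalars ℝ)‖ ≤ u / r := by
    refine ContinuousLinearMap.opNorm_bound_of_ball_bound hr u _ fun x hx => ?_
    have h1 := hball x hx
    have h2 := hball (-x) (by simpa using hx)
    simp only [map_neg] at h2
    simp only [ContinuousLinearMap.comp_apply, ContinuousLinearMap.coe_restrictScalars',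
      Real.norm_eq_abs, abs_le]
    constructor <;> linarith
  have hg := hA (StrongDual.extendRCLike f)
  rw [dualOp_extendRCLike, StrongDual.norm_extendRCLike, StrongDual.norm_extendRCLike] at hg
  have hu : 0 < u := by simpa using hball 0 (mem_closedBall_self hr.le)
  refine lt_irrefl u ?_
  calc u < f y := hfy
    _ ≤ ‖f‖ * ‖y‖ := (le_abs_self _).trans (f.le_opNorm y)
    _ ≤ K * (u / r) * ‖y‖ := by gcongr; exact hg.trans (by gcongr)
    _ = u / r * (K * ‖y‖) := by ring
    _ < u / r * r := by gcongr
    _ = u := div_mul_cancel₀ _ hr.ne'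

lemma surjective_of_dualOp_bound [CompleteSpace E] {A : E →L[ℂ] F} {K : ℝ≥0}
    (hA : ∀ g, ‖g‖ ≤ K * ‖dualOp A g‖) : Surjective A := by
  refine A.surjective_of_exists_approx_preimage (K + 1) fun y => ?_
  rcases eq_or_ne y 0 with rfl | hy
  · exact ⟨0, by simp⟩
  have hy' : 0 < ‖y‖ := norm_pos_iff.2 hy
  have hmem := mem_closure_image_closedBall_of_dualOp_bound hA
    (r := (K + 1 : ℝ≥0) * ‖y‖) (by push_cast; linarith)
  obtain ⟨-, ⟨x, hx, rfl⟩, hxy⟩ := Metric.mem_closure_iff.1 hmem (‖y‖ / 2) (by positivity)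
  exact ⟨x, by simpa using hx, (dist_eq_norm y (A x) ▸ hxy).le⟩

end DualOp

section PointResidualSpectrum

variable {E : Type*} [NormedAddCommGroup E] [NormedSpace ℂ E] {A : E →L[ℂ] E} {lam : ℂ}

lemma injective_smul_sub_of_notMem_pointSpectrum (h : lam ∉ pointSpectrum A) :
    Injective (fun x => lam • x - A x) := by
  intro x y hxy
  by_contra hne
  refine h ⟨x - y, sub_ne_zero.2 hne, ?_⟩
  simp only [map_sub, smul_sub]
  exact (sub_eq_sub_iff_sub_eq_sub.1 hxy).symm

lemma denseRange_smul_sub_of_notMem_residualSpectrum (hp : lam ∉ pointSpectrum A)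
    (hr : lam ∉ residualSpectrum A) : DenseRange (fun x => lam • x - A x) :=
  not_not.1 fun hd => hr ⟨injective_smul_sub_of_notMem_pointSpectrum hp, hd⟩

end PointResidualSpectrum

theorem approximate_eigenvectors_in_finite_codim {X Z : Type*}
    [NormedAddCommGroup X] [NormedSpace ℂ X] [CompleteSpace X]
    [NormedAddCommGroup Z] [NormedSpace ℂ Z] [CompleteSpace Z]
    (T : X →L[ℂ] X) (B : Z →L[ℂ] Z)
    (q : X →L[ℂ] Z) (hqinj : Function.Injective q)
    (hqcl : IsClosed (Set.range q))
    (hq : ∀ x : X, q (T x) = B (q x))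
    (lam : ℂ)
    (hlam : lam ∈ spectrum ℂ T \
      (pointSpectrum (dualOp T) ∪ pointSpectrum (dualOp B) ∪ residualSpectrum (dualOp B)))
    (X₀ : Submodule ℂ (StrongDual ℂ X)) (hX₀cl : IsClosed (X₀ : Set (StrongDual ℂ X)))
    (hX₀fc : FiniteDimensional ℂ (StrongDual ℂ X ⧸ X₀)) :
    ∃ zs : ℕ → StrongDual ℂ Z,
      (∀ n, dualOp q (zs n) ∈ X₀ ∧ ‖dualOp q (zs n)‖ = 1) ∧
      Tendsto (fun n => ‖lam • zs n - dualOp B (zs n)‖) atTop (𝓝 0) := by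
  obtain ⟨hspec, hnotin⟩ := hlam
  simp only [mem_union, not_or] at hnotin
  obtain ⟨⟨hpT, hpB⟩, hrB⟩ := hnotin
  set A := lam • ContinuousLinearMap.id ℂ X - T
  set B' := lam • ContinuousLinearMap.id ℂ Z - B
  have hqA : Semiconj q A B' := fun x => by simp [A, B', hq x]
  have hB'dense : DenseRange (dualOp B') :=
    coe_dualOp_smul_id_sub lam B ▸ denseRange_smul_sub_of_notMem_residualSpectrum hpB hrB
  have hA'inj : Injective (dualOp A) :=
    coe_dualOp_smul_id_sub lam T ▸ injective_smul_sub_of_notMem_pointSpectrum hpT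
  have hAinj : Injective A := by
    refine Injective.of_comp (f := q) ?_
    rw [hqA.comp_eq]
    exact (injective_of_denseRange_dualOp hB'dense).comp hqinj
  have hA'unbounded : ¬∃ K : ℝ≥0, ∀ f, ‖f‖ ≤ K * ‖dualOp A f‖ := fun ⟨K, hK⟩ => by
    refine spectrum.mem_iff.1 hspec ?_
    rw [Algebra.algebraMap_eq_smul_one]
    exact ContinuousLinearMap.isUnit_iff_bijective.2 ⟨hAinj, surjective_of_dualOp_bound hK⟩
  obtain ⟨zs, hzs, hlim⟩ := exists_seq_norm_eq_one_tendsto_zero (dualOp q) (dualOp B') X₀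
    fun ⟨K, hK⟩ => hA'unbounded <| exists_bound_of_semiconj hqA.dualOp
      (dualOp_surjective hqinj hqcl) hB'dense hA'inj hX₀cl hK
  exact ⟨zs, hzs, by simpa [B', coe_dualOp_smul_id_sub] using hlim⟩
end
end

section
/- Let G be a nonempty bounded open subset of ℂ, let S ⊆ ℂ be dominating in G, and let F ⊆ ℂ be a finite set. Then S∖F is dominating in G. -/
/-!
If `‖f‖ ≤ K` on `(S \ F) ∩ G` but not on all of `G`, pick `z ∈ G \ F` with `K < ‖f z‖` (the set where
`K < ‖f‖` is open, hence infinite, so it is not exhausted by `F`). Let `p` be the polynomial with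
zero set `F` and `C` a bound for `‖p‖` on the bounded set `G`. Applying domination by `S` to the
bounded analytic functions `f ^ n * p`, which are bounded by `K ^ n * C` on `S ∩ G`, gives
`‖f z‖ ^ n * ‖p z‖ ≤ K ^ n * C` for all `n`, which is impossible since `p z ≠ 0`.
-/

open NormedSpace Filter Topology Set

noncomputable section

/-- A set `S ⊆ ℂ` is dominating in the open set `G` if
`sup_{z ∈ G} |f z| = sup_{z ∈ S ∩ G} |f z|` for every bounded analytic function `f` on `G`. -/
def IsDominating (S G : Set ℂ) : Prop :=
  ∀ f : ℂ → ℂ, DifferentiableOn ℂ f G → BddAbove ((fun z => ‖f z‖) '' G) →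
    sSup ((fun z => ‖f z‖) '' G) = sSup ((fun z => ‖f z‖) '' (S ∩ G))

lemma le_of_forall_pow_mul_le {a b c C : ℝ} (hb : 0 ≤ b) (hc : 0 < c)
    (h : ∀ n : ℕ, a ^ n * c ≤ b ^ n * C) : a ≤ b := by
  by_contra! hba
  have ha : 0 < a := hb.trans_lt hba
  have hc_le : ∀ n : ℕ, c ≤ (b / a) ^ n * C := fun n => by
    rw [div_pow, div_mul_eq_mul_div, le_div_iff₀ (pow_pos ha n), mul_comm]
    exact h n
  have hlim : Tendsto (fun n : ℕ => (b / a) ^ n * C) atTop (𝓝 0) := by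
    simpa using (tendsto_pow_atTop_nhds_zero_of_lt_one (div_nonneg hb ha.le)
      ((div_lt_one ha).2 hba)).mul_const C
  exact hc.not_ge (ge_of_tendsto' hlim hc_le)

lemma forall_le_of_forall_mem_diff_finite {X : Type*} [TopologicalSpace X] [T1Space X]
    [∀ x : X, NeBot (𝓝[≠] x)] {G F : Set X} {g : X → ℝ} {K : ℝ} (hG : IsOpen G)
    (hg : ContinuousOn g G) (hF : F.Finite) (h : ∀ z ∈ G \ F, g z ≤ K) : ∀ z ∈ G, g z ≤ K := by
  by_contra! ⟨z, hzG, hKz⟩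
  have hU : IsOpen (G ∩ g ⁻¹' Ioi K) := hg.isOpen_inter_preimage hG isOpen_Ioi
  obtain ⟨w, ⟨hwG, hKw⟩, hwF⟩ :=
    ((infinite_of_mem_nhds z (hU.mem_nhds ⟨hzG, hKz⟩)).sdiff hF).nonempty
  exact (h w ⟨hwG, hwF⟩).not_gt hKw

lemma exists_differentiable_eq_zero_iff_mem {F : Set ℂ} (hF : F.Finite) :
    ∃ p : ℂ → ℂ, Differentiable ℂ p ∧ ∀ z, p z = 0 ↔ z ∈ F :=
  ⟨fun z => ∏ a ∈ hF.toFinset, (z - a),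
    Differentiable.fun_finsetProd fun a _ => differentiable_id.sub_const a,
    fun z => by simp [Finset.prod_eq_zero_iff, sub_eq_zero]⟩

/-- The condition `0 ≤ K` accounts for the convention `sSup ∅ = 0` when `S ∩ G = ∅`. -/
lemma isDominating_iff_forall_norm_le {S G : Set ℂ} :
    IsDominating S G ↔ ∀ f : ℂ → ℂ, DifferentiableOn ℂ f G →
      BddAbove ((fun z => ‖f z‖) '' G) → ∀ K : ℝ, 0 ≤ K →
        (∀ z ∈ S ∩ G, ‖f z‖ ≤ K) → ∀ z ∈ G, ‖f z‖ ≤ K := by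
  have sSup_nonneg (s : Set ℂ) (f : ℂ → ℂ) : 0 ≤ sSup ((fun z => ‖f z‖) '' s) :=
    Real.sSup_nonneg (forall_mem_image.2 fun _ _ => norm_nonneg _)
  constructor
  · intro hS f hf hbdd K hK hSK z hz
    calc ‖f z‖ ≤ sSup ((fun z => ‖f z‖) '' G) := le_csSup hbdd (mem_image_of_mem _ hz)
      _ = sSup ((fun z => ‖f z‖) '' (S ∩ G)) := hS f hf hbdd
      _ ≤ K := Real.sSup_le (forall_mem_image.2 hSK) hK
  · intro h f hf hbdd
    have hle_G : ∀ z ∈ S ∩ G, ‖f z‖ ≤ sSup ((fun z => ‖f z‖) '' G) := fun z hz =>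
      le_csSup hbdd (mem_image_of_mem _ hz.2)
    have hle_SG : ∀ z ∈ G, ‖f z‖ ≤ sSup ((fun z => ‖f z‖) '' (S ∩ G)) :=
      h f hf hbdd _ (sSup_nonneg _ f) fun z hz =>
        le_csSup (hbdd.mono (image_mono inter_subset_right)) (mem_image_of_mem _ hz)
    exact le_antisymm (Real.sSup_le (forall_mem_image.2 hle_SG) (sSup_nonneg _ f))
      (Real.sSup_le (forall_mem_image.2 hle_G) (sSup_nonneg _ f))

theorem dominating_sdiff_finite_general (G S F : Set ℂ)
    (hGopen : IsOpen G) (hGbdd : Bornology.IsBounded G)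
    (hS : IsDominating S G) (hF : F.Finite) :
    IsDominating (S \ F) G := by
  rw [isDominating_iff_forall_norm_le] at hS ⊢
  intro f hf hfbdd K hK hfK
  obtain ⟨M, hM⟩ : ∃ M, ∀ z ∈ G, ‖f z‖ ≤ M := by simpa [bddAbove_def] using hfbdd
  obtain ⟨p, hp, hp_zero⟩ := exists_differentiable_eq_zero_iff_mem hF
  obtain ⟨C, hC⟩ : ∃ C, ∀ z ∈ G, ‖p z‖ ≤ C :=
    (hGbdd.isCompact_closure.exists_bound_of_continuousOn hp.continuous.continuousOn).imp
      fun _ hC z hz => hC z (subset_closure hz)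
  refine forall_le_of_forall_mem_diff_finite hGopen hf.continuousOn.norm hF fun z hz => ?_
  have hC0 : 0 ≤ C := (norm_nonneg _).trans (hC z hz.1)
  refine le_of_forall_pow_mul_le (C := C) hK (norm_pos_iff.2 ((hp_zero z).not.2 hz.2)) fun n => ?_
  have hpow : ∀ w a, ‖f w‖ ≤ a → ‖f w ^ n‖ ≤ a ^ n := fun w a h =>
    (norm_pow _ _).trans_le (pow_le_pow_left₀ (norm_nonneg _) h n)
  have hbdd : BddAbove ((fun w => ‖f w ^ n * p w‖) '' G) :=
    ⟨M ^ n * C, forall_mem_image.2 fun w hw => norm_mul_le_of_le (hpow w M (hM w hw)) (hC w hw)⟩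
  have hSG : ∀ w ∈ S ∩ G, ‖f w ^ n * p w‖ ≤ K ^ n * C := by
    rintro w ⟨hwS, hwG⟩
    by_cases hwF : w ∈ F
    · simpa [(hp_zero w).2 hwF] using mul_nonneg (pow_nonneg hK n) hC0
    · exact norm_mul_le_of_le (hpow w K (hfK w ⟨⟨hwS, hwF⟩, hwG⟩)) (hC w hwG)
  simpa [norm_mul, norm_pow] using hS _ ((hf.pow n).mul hp.differentiableOn) hbdd _
    (mul_nonneg (pow_nonneg hK n) hC0) hSG z hz.1

theorem dominating_sdiff_finite (G S F : Set ℂ)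
    (hGopen : IsOpen G) (hGne : G.Nonempty) (hGbdd : Bornology.IsBounded G)
    (hS : IsDominating S G) (hF : F.Finite) :
    IsDominating (S \ F) G :=
  dominating_sdiff_finite_general G S F hGopen hGbdd hS hF
end
end

section
/- Let E be a complex normed space, let 0 < δ < 1, and let e₁, …, e_r ∈ E be vectors with ‖e_k‖ = 1 for all k such that α(span{e₁,…,e_{k−1}}, span{e_k,…,e_r}) > 1−δ for every k = 2, …, r, where α(U,V) := inf{‖u−v‖ : u ∈ U with ‖u‖ = 1, v ∈ V}. Then for all complex numbers α₁, …, α_r one has max{|α_k| : k = 1,…,r} ≤ (2/(1−δ)) ‖∑_{k=1}^r α_k e_k‖. -/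
open NormedSpace Filter Topology Set

noncomputable section

/-- `alphaSub U V = inf {‖u - v‖ : u ∈ U, ‖u‖ = 1, v ∈ V}`. -/
noncomputable def alphaSub {E : Type*} [NormedAddCommGroup E] [NormedSpace ℂ E]
    (U V : Submodule ℂ E) : ℝ :=
  sInf {d : ℝ | ∃ u ∈ U, ‖u‖ = 1 ∧ ∃ v ∈ V, d = ‖u - v‖}

lemma alphaSub_le {E : Type*} [NormedAddCommGroup E] [NormedSpace ℂ E]
    (U V : Submodule ℂ E) (u : E) (hu : u ∈ U) (hu1 : ‖u‖ = 1)
    (v : E) (hv : v ∈ V) : alphaSub U V ≤ ‖u - v‖ := by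
  apply csInf_le
  · refine ⟨0, fun d hd => ?_⟩
    obtain ⟨u', _, _, v', _, rfl⟩ := hd
    positivity
  · exact ⟨u, hu, hu1, v, hv, rfl⟩

lemma key_alpha_bound {E : Type*} [NormedAddCommGroup E] [NormedSpace ℂ E]
    (δ : ℝ) (U V : Submodule ℂ E) (h : 1 - δ < alphaSub U V)
    (s S : E) (hs : s ∈ U) (ht : S - s ∈ V) : (1 - δ) * ‖s‖ ≤ ‖S‖ := by
  rcases eq_or_ne s 0 with rfl | hs0
  · simpa using norm_nonneg S
  · have hns : 0 < ‖s‖ := norm_pos_iff.mpr hs0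
    set c : ℂ := ((‖s‖⁻¹ : ℝ) : ℂ) with hc
    have hu : c • s ∈ U := U.smul_mem _ hs
    have hu1 : ‖c • s‖ = 1 := by
      rw [norm_smul, hc]
      simp [abs_of_pos hns]
      field_simp
    have hv : c • (s - S) ∈ V := by
      have h1 : s - S = -(S - s) := by abel
      rw [h1]
      exact V.smul_mem _ (V.neg_mem ht)
    have hle := alphaSub_le U V _ hu hu1 _ hv
    have hdiff : c • s - c • (s - S) = c • S := by
      rw [← smul_sub]
      congr 1
      abel
    rw [hdiff] at hle
    have hnorm : ‖c • S‖ = ‖s‖⁻¹ * ‖S‖ := by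
      rw [norm_smul, hc]
      simp [abs_of_pos hns, mul_comm]
    have hlt := lt_of_lt_of_le h hle
    rw [hnorm] at hlt
    have h2 : (1 - δ) * ‖s‖ < (‖s‖⁻¹ * ‖S‖) * ‖s‖ :=
      mul_lt_mul_of_pos_right hlt hns
    have heq : (‖s‖⁻¹ * ‖S‖) * ‖s‖ = ‖S‖ := by field_simp
    linarith

theorem coefficient_bound_of_alpha_separation {E : Type*}
    [NormedAddCommGroup E] [NormedSpace ℂ E]
    (δ : ℝ) (hδ0 : 0 < δ) (hδ1 : δ < 1)
    (r : ℕ) (e : Fin r → E) (he : ∀ k, ‖e k‖ = 1)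
    (halpha : ∀ k : Fin r, 1 ≤ (k : ℕ) →
      1 - δ < alphaSub (Submodule.span ℂ (e '' {j : Fin r | (j : ℕ) < (k : ℕ)}))
        (Submodule.span ℂ (e '' {j : Fin r | (k : ℕ) ≤ (j : ℕ)}))) :
    ∀ a : Fin r → ℂ, ∀ k : Fin r, ‖a k‖ ≤ (2 / (1 - δ)) * ‖∑ j, a j • e j‖ := by
  intro a k
  have hd : (0:ℝ) < 1 - δ := by linarith
  set S : E := ∑ j, a j • e j with hS
  set P : ℕ → E := fun m =>
    ∑ j ∈ Finset.univ.filter (fun j : Fin r => (j : ℕ) < m), a j • e j with hP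
  -- bound for partial sums
  have hbound : ∀ m : ℕ, (1 - δ) * ‖P m‖ ≤ ‖S‖ := by
    intro m
    rcases Nat.eq_zero_or_pos m with rfl | hm1
    · have : P 0 = 0 := by simp [hP]
      rw [this]
      simpa using norm_nonneg S
    rcases le_or_gt r m with hmr | hmr
    · have : P m = S := by
        rw [hP, hS]
        apply Finset.sum_congr _ (fun _ _ => rfl)
        ext j
        simp only [Finset.mem_filter, Finset.mem_univ, true_and]
        exact ⟨fun _ => trivial, fun _ => lt_of_lt_of_le j.isLt hmr⟩
      rw [this]
      nlinarith [norm_nonneg S]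
    · set km : Fin r := ⟨m, hmr⟩ with hkm
      have hα := halpha km hm1
      apply key_alpha_bound δ _ _ hα
      · apply Submodule.sum_mem
        intro j hj
        simp only [Finset.mem_filter] at hj
        exact Submodule.smul_mem _ _ (Submodule.subset_span ⟨j, hj.2, rfl⟩)
      · have hsplit : S - P m =
            ∑ j ∈ Finset.univ.filter (fun j : Fin r => ¬ (j : ℕ) < m), a j • e j := by
          simp only [hS, hP]
          rw [sub_eq_iff_eq_add']
          exact (Finset.sum_filter_add_sum_filter_not Finset.univ
            (fun j : Fin r => (j : ℕ) < m) (fun j => a j • e j)).symm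
        rw [hsplit]
        apply Submodule.sum_mem
        intro j hj
        simp only [Finset.mem_filter, not_lt] at hj
        exact Submodule.smul_mem _ _ (Submodule.subset_span ⟨j, hj.2, rfl⟩)
  -- a k • e k = P (k+1) - P k
  have hstep : a k • e k = P ((k : ℕ) + 1) - P (k : ℕ) := by
    have hins : Finset.univ.filter (fun j : Fin r => (j : ℕ) < (k : ℕ) + 1) =
        insert k (Finset.univ.filter (fun j : Fin r => (j : ℕ) < (k : ℕ))) := by
      ext j
      simp only [Finset.mem_filter, Finset.mem_univ, true_and, Finset.mem_insert, Fin.ext_iff]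
      omega
    rw [hP]
    simp only [hins]
    rw [Finset.sum_insert (by simp)]
    abel
  have hak : ‖a k‖ = ‖P ((k : ℕ) + 1) - P (k : ℕ)‖ := by
    rw [← hstep, norm_smul, he k, mul_one]
  have h1 := hbound (k : ℕ)
  have h2 := hbound ((k : ℕ) + 1)
  have htri : ‖P ((k : ℕ) + 1) - P (k : ℕ)‖ ≤ ‖P ((k : ℕ) + 1)‖ + ‖P (k : ℕ)‖ :=
    norm_sub_le _ _
  rw [hak, div_mul_eq_mul_div, le_div_iff₀ hd]
  nlinarith
end
end
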